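/- Let 0 < q < 1. The family of elements x^k (x*)^l, k, l ≥ 0, is a vector space basis of the ℂ-vector space P(D_q) (i.e. these elements are linearly independent over ℂ and span P(D_q)). -/
import Mathlib


noncomputable section

/-- The free algebra ℂ⟨x, x*⟩ on two generators (generator 0 is `x`, generator 1 is `x*`). -/
abbrev FreeDisc : Type := FreeAlgebra ℂ (Fin 2)

/-- The defining relation of the quantum disc: x* x = q x x* + (1 - q)·1. -/
def discRel (q : ℝ) : FreeDisc → FreeDisc → Prop := fun a b =>
  a = FreeAlgebra.ι ℂ (1 : Fin 2) * FreeAlgebra.ι ℂ (0 : Fin 2) ∧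
  b = (q : ℂ) • (FreeAlgebra.ι ℂ (0 : Fin 2) * FreeAlgebra.ι ℂ (1 : Fin 2)) +
      ((1 : ℂ) - (q : ℂ)) • 1

/-- The polynomial quantum disc algebra P(D_q). -/
abbrev QDisc (q : ℝ) : Type := RingQuot (discRel q)

/-- The generator x of P(D_q). -/
def xq (q : ℝ) : QDisc q := RingQuot.mkAlgHom ℂ (discRel q) (FreeAlgebra.ι ℂ 0)

/-- The generator x* of P(D_q). -/
def xsq (q : ℝ) : QDisc q := RingQuot.mkAlgHom ℂ (discRel q) (FreeAlgebra.ι ℂ 1)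

/-! ### A representation of the quantum disc on `ℕ →₀ ℂ` -/

/-- The representation space. -/
abbrev V : Type := ℕ →₀ ℂ

/-- The shift operator: `e_n ↦ e_{n+1}` (representing x). -/
def Aop : Module.End ℂ V := Finsupp.lmapDomain ℂ ℂ (· + 1)

/-- The weighted down-shift: `e_n ↦ (1 - q^n) e_{n-1}` (representing x*). -/
def Bop (q : ℝ) : Module.End ℂ V :=
  Finsupp.lsum ℂ (fun n => (1 - (q:ℂ)^n) • Finsupp.lsingle (n-1))

lemma Aop_single (n : ℕ) (c : ℂ) : Aop (Finsupp.single n c) = Finsupp.single (n+1) c := by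
  simp [Aop, Finsupp.lmapDomain_apply, Finsupp.mapDomain_single]

lemma Bop_single (q : ℝ) (n : ℕ) (c : ℂ) :
    Bop q (Finsupp.single n c) = (1 - (q:ℂ)^n) • Finsupp.single (n-1) c := by
  simp [Bop]

lemma rel_end (q : ℝ) :
    (Bop q * Aop : Module.End ℂ V) =
      (q:ℂ) • (Aop * Bop q) + ((1:ℂ) - (q:ℂ)) • 1 := by
  apply Finsupp.lhom_ext
  intro n c
  cases n with
  | zero =>
      simp [Module.End.mul_apply, Aop_single, Bop_single]
  | succ m =>
      simp only [Module.End.mul_apply, LinearMap.add_apply, LinearMap.smul_apply,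
        Module.End.one_apply, Aop_single, Bop_single, Nat.add_sub_cancel, map_smul]
      rw [smul_smul, ← add_smul]
      congr 1
      ring

lemma Aop_pow (k n : ℕ) : (Aop ^ k) (Finsupp.single n 1) = Finsupp.single (n+k) 1 := by
  induction k generalizing n with
  | zero => simp
  | succ k ih =>
      rw [pow_succ', Module.End.mul_apply, ih, Aop_single, add_assoc]

/-- `cc q n l = (1-q^n)(1-q^{n-1})⋯(1-q^{n-l+1})` (with truncated subtraction). -/
def cc (q : ℝ) : ℕ → ℕ → ℂ
  | _, 0 => 1
  | n, (l+1) => (1 - (q:ℂ)^n) * cc q (n-1) l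

lemma Bop_pow (q : ℝ) (l n : ℕ) :
    ((Bop q) ^ l) (Finsupp.single n 1) = cc q n l • Finsupp.single (n - l) 1 := by
  induction l generalizing n with
  | zero => simp [cc]
  | succ l ih =>
      rw [pow_succ, Module.End.mul_apply, Bop_single, map_smul, ih, cc, smul_smul,
        Nat.sub_sub]
      norm_num [Nat.sub_sub, add_comm]

lemma cc_ne_zero {q : ℝ} (hq0 : 0 < q) (hq1 : q < 1) :
    ∀ {l n : ℕ}, l ≤ n → cc q n l ≠ 0 := by
  intro l
  induction l with
  | zero => intro n _; simp [cc]
  | succ l ih =>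
      intro n hn
      obtain ⟨m, rfl⟩ : ∃ m, n = m + 1 := ⟨n - 1, by omega⟩
      rw [cc]
      apply mul_ne_zero _ (ih (by omega))
      rw [sub_ne_zero]
      intro h
      have : ((q:ℂ)^(m+1)) = ((q^(m+1) : ℝ) : ℂ) := by push_cast; ring
      rw [this] at h
      have hr : (q:ℝ)^(m+1) = 1 := by exact_mod_cast h.symm
      have : (q:ℝ)^(m+1) < 1 := pow_lt_one₀ hq0.le hq1 (by omega)
      linarith

lemma cc_eq_zero {q : ℝ} : ∀ {l n : ℕ}, n < l → cc q n l = 0 := by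
  intro l
  induction l with
  | zero => omega
  | succ l ih =>
      intro n hn
      cases n with
      | zero => simp [cc]
      | succ m =>
          rw [cc, Nat.add_sub_cancel, ih (by omega), mul_zero]

/-- The monomials `A^k B^l` are linearly independent in `End(V)`. -/
lemma end_li {q : ℝ} (hq0 : 0 < q) (hq1 : q < 1) :
    LinearIndependent ℂ
      (fun kl : ℕ × ℕ => (Aop ^ kl.1 * Bop q ^ kl.2 : Module.End ℂ V)) := by
  rw [linearIndependent_iff (R := ℂ)
    (v := fun kl : ℕ × ℕ => (Aop ^ kl.1 * Bop q ^ kl.2 : Module.End ℂ V))]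
  intro g hg
  suffices h : ∀ l₀ k₀ : ℕ, g (k₀, l₀) = 0 by
    ext ⟨k, l⟩; exact h l k
  intro l₀
  induction l₀ using Nat.strong_induction_on with
  | _ l₀ ih =>
  intro k₀
  have h1 := congrArg (fun T : Module.End ℂ V => T (Finsupp.single l₀ 1)) hg
  simp only [Finsupp.linearCombination_apply, Finsupp.sum, LinearMap.coe_sum,
    Finset.sum_apply, LinearMap.smul_apply, Module.End.mul_apply, LinearMap.zero_apply,
    Bop_pow, map_smul, Aop_pow] at h1
  have h2 := congrArg (fun v : V => v k₀) h1
  simp only [Finsupp.finset_sum_apply, Finsupp.smul_apply, Finsupp.single_apply,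
    Finsupp.coe_zero, Pi.zero_apply, smul_eq_mul] at h2
  by_cases hmem : (k₀, l₀) ∈ g.support
  · have h3 : ∀ b ∈ g.support, b ≠ (k₀, l₀) →
        g b * (cc q l₀ b.2 * if l₀ - b.2 + b.1 = k₀ then 1 else 0) = 0 := by
      rintro ⟨k, l⟩ _ hne
      rcases lt_trichotomy l l₀ with hl | rfl | hl
      · rw [ih l hl k, zero_mul]
      · have hk : k ≠ k₀ := by
          intro h; exact hne (by rw [h])
        rw [if_neg (by omega), mul_zero, mul_zero]
      · rw [cc_eq_zero hl, zero_mul, mul_zero]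
    rw [Finset.sum_eq_single_of_mem _ hmem h3] at h2
    rw [if_pos (by omega), mul_one] at h2
    exact (mul_eq_zero.mp h2).resolve_right (cc_ne_zero hq0 hq1 le_rfl)
  · exact Finsupp.notMem_support_iff.mp hmem

/-! ### The representation as an algebra homomorphism -/

def phi (q : ℝ) : FreeDisc →ₐ[ℂ] Module.End ℂ V :=
  FreeAlgebra.lift ℂ ![Aop, Bop q]

def psi (q : ℝ) : QDisc q →ₐ[ℂ] Module.End ℂ V :=
  RingQuot.liftAlgHom ℂ ⟨phi q, by
    rintro a b ⟨rfl, rfl⟩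
    simp only [map_mul, map_add, map_smul, map_one, phi, FreeAlgebra.lift_ι_apply,
      Matrix.cons_val_zero, Matrix.cons_val_one, Matrix.head_cons]
    exact rel_end q⟩

lemma psi_xq (q : ℝ) : psi q (xq q) = Aop := by
  rw [xq, psi, RingQuot.liftAlgHom_mkAlgHom_apply]
  simp [phi, FreeAlgebra.lift_ι_apply]

lemma psi_xsq (q : ℝ) : psi q (xsq q) = Bop q := by
  rw [xsq, psi, RingQuot.liftAlgHom_mkAlgHom_apply]
  simp [phi, FreeAlgebra.lift_ι_apply]

/-! ### Relations in the quantum disc algebra -/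

lemma rel_q (q : ℝ) :
    xsq q * xq q = (q:ℂ) • (xq q * xsq q) + ((1:ℂ) - (q:ℂ)) • 1 := by
  have h := RingQuot.mkAlgHom_rel ℂ (s := discRel q)
    (x := FreeAlgebra.ι ℂ (1 : Fin 2) * FreeAlgebra.ι ℂ (0 : Fin 2)) ⟨rfl, rfl⟩
  simpa [xq, xsq, Algebra.smul_def, map_mul, map_add, map_one, AlgHom.commutes] using h

lemma comm' (q : ℝ) : ∀ k : ℕ,
    xsq q * xq q ^ (k+1) =
      ((q:ℂ)^(k+1)) • (xq q ^ (k+1) * xsq q) + ((1:ℂ) - (q:ℂ)^(k+1)) • xq q ^ k := by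
  intro k
  induction k with
  | zero => simpa using rel_q q
  | succ k ih =>
      have h1 : xsq q * xq q ^ (k+2) = (xsq q * xq q) * xq q ^ (k+1) := by
        rw [pow_succ' (xq q) (k+1), ← mul_assoc]
      rw [h1, rel_q q, add_mul, smul_mul_assoc, smul_mul_assoc, one_mul,
        mul_assoc, ih, mul_add, mul_smul_comm, mul_smul_comm, smul_add,
        smul_smul, smul_smul, ← mul_assoc, ← pow_succ' (xq q) (k+1),
        ← pow_succ' (xq q) k]
      rw [add_assoc, ← add_smul]
      congr 2
      · ring
      · ring

/-! ### Spanning -/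

section spanpart
variable (q : ℝ)

abbrev Sspan : Submodule ℂ (QDisc q) :=
  Submodule.span ℂ (Set.range fun kl : ℕ × ℕ => xq q ^ kl.1 * xsq q ^ kl.2)

lemma mem_Sspan (k l : ℕ) : xq q ^ k * xsq q ^ l ∈ Sspan q :=
  Submodule.subset_span ⟨(k, l), rfl⟩

lemma one_mem_Sspan : (1 : QDisc q) ∈ Sspan q := by
  have := mem_Sspan q 0 0
  simpa using this

lemma xq_mul_mem {a : QDisc q} (ha : a ∈ Sspan q) : xq q * a ∈ Sspan q := by
  induction ha using Submodule.span_induction with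
  | mem a h =>
      obtain ⟨⟨k, l⟩, rfl⟩ := h
      have : xq q * (xq q ^ k * xsq q ^ l) = xq q ^ (k+1) * xsq q ^ l := by
        rw [← mul_assoc, ← pow_succ']
      rw [this]; exact mem_Sspan q _ _
  | zero => simpa using Submodule.zero_mem _
  | add a b _ _ ha hb => rw [mul_add]; exact Submodule.add_mem _ ha hb
  | smul c a _ ha => rw [mul_smul_comm]; exact Submodule.smul_mem _ _ ha

lemma xsq_mul_mem {a : QDisc q} (ha : a ∈ Sspan q) : xsq q * a ∈ Sspan q := by
  induction ha using Submodule.span_induction with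
  | mem a h =>
      obtain ⟨⟨k, l⟩, rfl⟩ := h
      cases k with
      | zero =>
          have : xsq q * (xq q ^ 0 * xsq q ^ l) = xq q ^ 0 * xsq q ^ (l+1) := by
            rw [pow_zero, one_mul, one_mul, ← pow_succ']
          rw [this]; exact mem_Sspan q _ _
      | succ k =>
          have : xsq q * (xq q ^ (k+1) * xsq q ^ l) = (xsq q * xq q ^ (k+1)) * xsq q ^ l := by
            rw [mul_assoc]
          rw [this, comm' q k, add_mul, smul_mul_assoc, smul_mul_assoc,
            mul_assoc, ← pow_succ']
          exact Submodule.add_mem _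
            (Submodule.smul_mem _ _ (mem_Sspan q _ _))
            (Submodule.smul_mem _ _ (mem_Sspan q _ _))
  | zero => simpa using Submodule.zero_mem _
  | add a b _ _ ha hb => rw [mul_add]; exact Submodule.add_mem _ ha hb
  | smul c a _ ha => rw [mul_smul_comm]; exact Submodule.smul_mem _ _ ha

lemma Sspan_top : Sspan q = ⊤ := by
  rw [Submodule.eq_top_iff']
  intro y
  obtain ⟨a, rfl⟩ := RingQuot.mkAlgHom_surjective ℂ (discRel q) y
  have key : ∀ a : FreeDisc, ∀ b ∈ Sspan q,
      RingQuot.mkAlgHom ℂ (discRel q) a * b ∈ Sspan q := by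
    intro a
    induction a using FreeAlgebra.induction with
    | grade0 r =>
        intro b hb
        rw [AlgHom.commutes, ← Algebra.smul_def]
        exact Submodule.smul_mem _ _ hb
    | grade1 i =>
        intro b hb
        fin_cases i
        · exact xq_mul_mem q hb
        · exact xsq_mul_mem q hb
    | mul a₁ a₂ h₁ h₂ =>
        intro b hb
        rw [map_mul, mul_assoc]
        exact h₁ _ (h₂ _ hb)
    | add a₁ a₂ h₁ h₂ =>
        intro b hb
        rw [map_add, add_mul]
        exact Submodule.add_mem _ (h₁ _ hb) (h₂ _ hb)
  have := key a 1 (one_mem_Sspan q)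
  simpa using this

end spanpart

/-- For 0 < q < 1, the elements x^k (x*)^l (k, l ≥ 0) form a vector space
basis of P(D_q). -/
theorem qdisc_monomial_basis (q : ℝ) (hq0 : 0 < q) (hq1 : q < 1) :
    LinearIndependent ℂ (fun kl : ℕ × ℕ => xq q ^ kl.1 * xsq q ^ kl.2) ∧
    Submodule.span ℂ (Set.range fun kl : ℕ × ℕ => xq q ^ kl.1 * xsq q ^ kl.2) = ⊤ := by
  constructor
  · refine LinearIndependent.of_comp (M' := Module.End ℂ V) (psi q).toLinearMap ?_
    have hcomp : ((psi q).toLinearMap ∘ fun kl : ℕ × ℕ => xq q ^ kl.1 * xsq q ^ kl.2) =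
        fun kl : ℕ × ℕ => (Aop ^ kl.1 * Bop q ^ kl.2 : Module.End ℂ V) := by
      funext kl
      simp [map_mul, map_pow, psi_xq, psi_xsq]
    rw [hcomp]
    exact end_li hq0 hq1
  · exact Sspan_top q
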